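/- arXiv:2302.09524 — 5 statements merged into one kernel-verified Lean document; each statement's English description precedes it below -/
import Mathlib

section
/- Let d ≥ 2 and k ∈ {2, …, d−1} be integers and let s ≥ 0 be a fixed real number. Define, for r > 0 with cosh r ≥ cosh s, g_r(s) := e^{−r(k−1)} · ω_k · ∫₀^{arcosh(cosh r / cosh s)} (sinh u)^{k−1} du. Then g_r(s) tends to (ω_k / ((k−1)·2^{k−1})) · (cosh s)^{−(k−1)} as r → ∞. -/
/-!
With n = k - 1: since sinh u = e^u/2 - e^(-u)/2, the integrand (sinh u)^n differs from
(e^u/2)^n by at most (n/2)(e^u/2)^(n-1), so e^(-nR) ∫₀^R (sinh u)^n du → 1/(n 2^n) as R → ∞.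
For R = arcosh (cosh r / cosh s) we have R - r → -log (cosh s), because arcosh x - log x → log 2
and log (cosh r) - r → -log 2; writing e^(-nr) = e^(-nR) e^(n(R-r)) then produces the factor
(cosh s)^(-n).
-/

open Real Filter Topology intervalIntegral

lemma exp_div_two_sub_sinh (u : ℝ) : exp u / 2 - sinh u = exp (-u) / 2 := by
  rw [sinh_eq]; ring

lemma sinh_le_exp_div_two (u : ℝ) : sinh u ≤ exp u / 2 := by
  linarith [exp_div_two_sub_sinh u, exp_pos (-u)]

lemma exp_div_two_pow_sub_sinh_pow_le {u : ℝ} (hu : 0 ≤ u) (n : ℕ) :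
    (exp u / 2) ^ n - sinh u ^ n ≤ n / 2 * (exp u / 2) ^ (n - 1) := by
  have h_sinh_le : |sinh u| ≤ |exp u / 2| := by
    rw [abs_of_nonneg (sinh_nonneg_iff.2 hu), abs_of_pos (by positivity)]
    exact sinh_le_exp_div_two u
  calc (exp u / 2) ^ n - sinh u ^ n
      ≤ |exp u / 2 - sinh u| * n * max |exp u / 2| |sinh u| ^ (n - 1) :=
        (le_abs_self _).trans (abs_pow_sub_pow_le ..)
    _ ≤ n / 2 * (exp u / 2) ^ (n - 1) := by
      rw [max_eq_left h_sinh_le, exp_div_two_sub_sinh, abs_of_pos (by positivity),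
        abs_of_pos (by positivity)]
      have : exp (-u) ≤ 1 := exp_le_one_iff.2 (by linarith)
      have : 0 ≤ (n : ℝ) * (exp u / 2) ^ (n - 1) := by positivity
      nlinarith

lemma integral_exp_div_two_pow_sub_sinh_pow_le {R : ℝ} (hR : 0 ≤ R) (n : ℕ) :
    ∫ u in 0..R, ((exp u / 2) ^ n - sinh u ^ n) ≤ R * (n / 2 * (exp R / 2) ^ (n - 1)) := by
  have h_cont : Continuous fun u => (exp u / 2) ^ n - sinh u ^ n := by fun_prop
  have h_bound : ∀ u ∈ Set.Icc 0 R,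
      (exp u / 2) ^ n - sinh u ^ n ≤ n / 2 * (exp R / 2) ^ (n - 1) := fun u hu =>
    (exp_div_two_pow_sub_sinh_pow_le hu.1 n).trans (by gcongr; exact hu.2)
  have h := integral_mono_on hR (h_cont.intervalIntegrable _ _)
    (intervalIntegrable_const (μ := MeasureTheory.volume)) h_bound
  rwa [integral_const, smul_eq_mul, sub_zero] at h

lemma integral_exp_div_two_pow {n : ℕ} (hn : n ≠ 0) (R : ℝ) :
    ∫ u in 0..R, (exp u / 2) ^ n = (exp (R * n) - 1) / (n * 2 ^ n) := by
  simp_rw [div_pow, ← exp_nat_mul]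
  rw [integral_div, integral_comp_mul_left exp (Nat.cast_ne_zero.2 hn), integral_exp]
  field_simp
  simp [hn]

lemma tendsto_exp_neg_mul_atTop_nhds_zero {a : ℝ} (ha : 0 < a) :
    Tendsto (fun R => exp (-(R * a))) atTop (𝓝 0) :=
  tendsto_exp_neg_atTop_nhds_zero.comp (tendsto_id.atTop_mul_const ha)

theorem tendsto_exp_neg_mul_integral_sinh_pow {n : ℕ} (hn : n ≠ 0) :
    Tendsto (fun R => exp (-(R * n)) * ∫ u in 0..R, sinh u ^ n) atTop (𝓝 (n * 2 ^ n)⁻¹) := by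
  have hn_pos : (0 : ℝ) < n := by positivity
  set err : ℝ → ℝ := fun R => exp (-(R * n)) * ∫ u in 0..R, ((exp u / 2) ^ n - sinh u ^ n)
  have h_decomp : ∀ R, exp (-(R * n)) * ∫ u in 0..R, sinh u ^ n =
      (1 - exp (-(R * n))) / (n * 2 ^ n) - err R := by
    intro R
    have h_exp_pow : Continuous fun u => (exp u / 2) ^ n := by fun_prop
    have h_sinh_pow : Continuous fun u => sinh u ^ n := by fun_prop
    simp only [err]
    rw [integral_sub (h_exp_pow.intervalIntegrable _ _) (h_sinh_pow.intervalIntegrable _ _),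
      integral_exp_div_two_pow hn, mul_sub, exp_neg]
    field_simp [(exp_pos (R * n)).ne']
    ring
  have h_err_le : ∀ R, 0 ≤ R → err R ≤ n / 2 ^ n * (R * exp (-R)) := by
    intro R hR
    have h_exp : exp (-(R * n)) * (exp R / 2) ^ (n - 1) = exp (-R) * 2 / 2 ^ n := by
      obtain ⟨m, rfl⟩ := Nat.exists_eq_add_one_of_ne_zero hn
      rw [Nat.add_sub_cancel, div_pow, ← exp_nat_mul, pow_succ]
      field_simp
      rw [← exp_add]
      congr 1
      push_cast
      ring
    calc err R ≤ exp (-(R * n)) * (R * (n / 2 * (exp R / 2) ^ (n - 1))) :=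
          mul_le_mul_of_nonneg_left (integral_exp_div_two_pow_sub_sinh_pow_le hR n) (exp_pos _).le
      _ = n / 2 ^ n * (R * exp (-R)) := by
          rw [show exp (-(R * n)) * (R * (n / 2 * (exp R / 2) ^ (n - 1))) =
            R * n / 2 * (exp (-(R * n)) * (exp R / 2) ^ (n - 1)) by ring, h_exp]
          ring
  have h_err_nonneg : ∀ R, 0 ≤ R → 0 ≤ err R := fun R hR =>
    mul_nonneg (exp_pos _).le (integral_nonneg hR fun u hu =>
      sub_nonneg.2 (pow_le_pow_left₀ (sinh_nonneg_iff.2 hu.1) (sinh_le_exp_div_two u) n))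
  have h_err : Tendsto err atTop (𝓝 0) := by
    refine squeeze_zero' (eventually_ge_atTop 0 |>.mono h_err_nonneg)
      (eventually_ge_atTop 0 |>.mono h_err_le) ?_
    simpa using (tendsto_pow_mul_exp_neg_atTop_nhds_zero 1).const_mul ((n : ℝ) / 2 ^ n)
  have h_main : Tendsto (fun R => (1 - exp (-(R * n))) / (n * 2 ^ n)) atTop
      (𝓝 ((1 - 0) / (n * 2 ^ n))) :=
    ((tendsto_exp_neg_mul_atTop_nhds_zero hn_pos).const_sub 1).div_const _
  simpa [h_decomp] using h_main.sub h_err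

theorem tendsto_arcosh_sub_log_atTop : Tendsto (fun x => arcosh x - log x) atTop (𝓝 (log 2)) := by
  have h_eq : ∀ x : ℝ, 1 ≤ x → log (1 + √(1 - x⁻¹ ^ 2)) = arcosh x - log x := by
    intro x hx
    have hx0 : 0 < x := by linarith
    rw [arcosh, eq_sub_iff_add_eq', ← log_mul hx0.ne' (by positivity), mul_add, mul_one,
      show x ^ 2 - 1 = x ^ 2 * (1 - x⁻¹ ^ 2) by field_simp, sqrt_mul (sq_nonneg x),
      sqrt_sq hx0.le]
  have h_lim : Tendsto (fun x : ℝ => log (1 + √(1 - x⁻¹ ^ 2))) atTop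
      (𝓝 (log (1 + √(1 - 0 ^ 2)))) :=
    ((((tendsto_inv_atTop_zero.pow 2).const_sub 1).sqrt).const_add 1).log (by positivity)
  rw [show log (1 + √(1 - (0 : ℝ) ^ 2)) = log 2 by norm_num] at h_lim
  exact h_lim.congr' ((eventually_ge_atTop 1).mono h_eq)

theorem tendsto_log_cosh_sub_atTop : Tendsto (fun r => log (cosh r) - r) atTop (𝓝 (-log 2)) := by
  have h_eq : ∀ r, log ((1 + exp (-(r * 2))) / 2) = log (cosh r) - r := by
    intro r
    have h_cosh : (1 + exp (-(r * 2))) / 2 = cosh r / exp r := by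
      rw [cosh_eq, show -(r * 2) = -r + -r by ring, exp_add, exp_neg]
      field_simp
    rw [h_cosh, log_div (cosh_pos r).ne' (exp_pos r).ne', log_exp]
  have h_lim : Tendsto (fun r => log ((1 + exp (-(r * 2))) / 2)) atTop (𝓝 (log ((1 + 0) / 2))) :=
    (((tendsto_exp_neg_mul_atTop_nhds_zero two_pos).const_add 1).div_const 2).log (by norm_num)
  rw [add_zero, one_div, log_inv] at h_lim
  exact h_lim.congr h_eq

lemma tendsto_cosh_atTop : Tendsto cosh atTop atTop :=
  tendsto_atTop_mono (fun r => by rw [cosh_eq]; linarith [exp_pos (-r)])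
    (tendsto_exp_atTop.atTop_div_const two_pos)

theorem tendsto_arcosh_cosh_div_sub {c : ℝ} (hc : 0 < c) :
    Tendsto (fun r => arcosh (cosh r / c) - r) atTop (𝓝 (-log c)) := by
  have h := ((tendsto_arcosh_sub_log_atTop.comp (tendsto_cosh_atTop.atTop_div_const hc)).add
    tendsto_log_cosh_sub_atTop).sub_const (log c)
  rw [add_neg_cancel, zero_sub] at h
  refine h.congr fun r => ?_
  simp only [Function.comp_apply, log_div (cosh_pos r).ne' hc.ne']
  ring

theorem tendsto_exp_neg_mul_integral_sinh_pow_arcosh {n : ℕ} (hn : n ≠ 0) {c : ℝ} (hc : 0 < c) :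
    Tendsto (fun r => exp (-(r * n)) * ∫ u in 0..arcosh (cosh r / c), sinh u ^ n) atTop
      (𝓝 (((n : ℝ) * 2 ^ n)⁻¹ * (c ^ n)⁻¹)) := by
  have h_shift := tendsto_arcosh_cosh_div_sub hc
  have h_top : Tendsto (fun r => arcosh (cosh r / c)) atTop atTop :=
    (h_shift.add_atTop tendsto_id).congr fun r => sub_add_cancel _ _
  have h := ((tendsto_exp_neg_mul_integral_sinh_pow hn).comp h_top).mul
    (h_shift.mul_const (n : ℝ)).rexp
  have h_pow : exp (-log c * n) = (c ^ n)⁻¹ := by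
    rw [neg_mul, exp_neg, mul_comm, exp_nat_mul, exp_log hc]
  rw [h_pow] at h
  refine h.congr fun r => ?_
  rw [Function.comp_apply, mul_right_comm, ← exp_add]
  congr 2
  ring

theorem g_r_tendsto_general (k : ℕ) (hk : 2 ≤ k) (s : ℝ) :
    Tendsto (fun r : ℝ =>
        Real.exp (-(r * ((k : ℝ) - 1))) * (2 * Real.pi ^ ((k : ℝ) / 2) / Real.Gamma ((k : ℝ) / 2)) *
          ∫ u in (0:ℝ)..Real.log (Real.cosh r / Real.cosh s +
              Real.sqrt ((Real.cosh r / Real.cosh s) ^ 2 - 1)),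
            Real.sinh u ^ (k - 1))
      atTop
      (nhds ((2 * Real.pi ^ ((k : ℝ) / 2) / Real.Gamma ((k : ℝ) / 2)) /
          (((k : ℝ) - 1) * 2 ^ (k - 1)) * (Real.cosh s ^ (k - 1))⁻¹)) := by
  have h_cast : ((k - 1 : ℕ) : ℝ) = k - 1 := by rw [Nat.cast_sub (by omega), Nat.cast_one]
  have h := (tendsto_exp_neg_mul_integral_sinh_pow_arcosh (n := k - 1) (by omega)
    (cosh_pos s)).const_mul (2 * π ^ ((k : ℝ) / 2) / Gamma ((k : ℝ) / 2))
  rw [h_cast] at h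
  convert h using 2 with r
  · simp only [arcosh]
    ring
  · ring

/-- Let 2 ≤ k ≤ d−1 and s ≥ 0 be fixed. With ω_k = 2π^{k/2}/Γ(k/2) and
arcosh z = log(z + √(z²−1)), the normalized flat-section volume
g_r(s) = e^{−r(k−1)} ω_k ∫₀^{arcosh(cosh r/cosh s)} sinh^{k−1} u du
tends to (ω_k/((k−1)2^{k−1})) (cosh s)^{−(k−1)} as r → ∞. -/
theorem g_r_tendsto (d k : ℕ) (hd : 2 ≤ d) (hk : 2 ≤ k) (hkd : k ≤ d - 1)
    (s : ℝ) (hs : 0 ≤ s) :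
    Tendsto (fun r : ℝ =>
        Real.exp (-(r * ((k : ℝ) - 1))) * (2 * Real.pi ^ ((k : ℝ) / 2) / Real.Gamma ((k : ℝ) / 2)) *
          ∫ u in (0:ℝ)..Real.log (Real.cosh r / Real.cosh s +
              Real.sqrt ((Real.cosh r / Real.cosh s) ^ 2 - 1)),
            Real.sinh u ^ (k - 1))
      atTop
      (nhds ((2 * Real.pi ^ ((k : ℝ) / 2) / Real.Gamma ((k : ℝ) / 2)) /
          (((k : ℝ) - 1) * 2 ^ (k - 1)) * (Real.cosh s ^ (k - 1))⁻¹)) :=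
  g_r_tendsto_general k hk s
end

section
/- Let k ≥ 2 be an integer and let r, s be reals with 0 ≤ s ≤ r. Then e^{−r(k−1)} · ∫₀^{arcosh(cosh r / cosh s)} (sinh u)^{k−1} du ≤ (cosh s)^{−(k−1)} / (k−1). -/
open Real

/-- For an integer k ≥ 2 and reals 0 ≤ s ≤ r,
e^{−r(k−1)} ∫₀^{arcosh(cosh r / cosh s)} sinh^{k−1} u du ≤ (cosh s)^{−(k−1)}/(k−1),
where arcosh z := log(z + √(z²−1)). -/
theorem exp_mul_integral_sinh_pow_le (k : ℕ) (hk : 2 ≤ k) (r s : ℝ)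
    (hs : 0 ≤ s) (hsr : s ≤ r) :
    Real.exp (-(r * ((k : ℝ) - 1))) *
        ∫ u in (0:ℝ)..Real.log (Real.cosh r / Real.cosh s +
            Real.sqrt ((Real.cosh r / Real.cosh s) ^ 2 - 1)),
          Real.sinh u ^ (k - 1)
      ≤ (Real.cosh s ^ (k - 1))⁻¹ / ((k : ℝ) - 1) := by
  obtain ⟨m, rfl⟩ : ∃ m, k = m + 2 := ⟨k - 2, by omega⟩
  have hr : 0 ≤ r := hs.trans hsr
  set x : ℝ := Real.cosh r / Real.cosh s with hx
  set R : ℝ := Real.log (x + Real.sqrt (x ^ 2 - 1)) with hR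
  have hcs : 0 < Real.cosh s := Real.cosh_pos s
  have hx1 : 1 ≤ x := by
    rw [hx, le_div_iff₀ hcs, one_mul]
    exact Real.cosh_le_cosh.2 (by rwa [abs_of_nonneg hs, abs_of_nonneg hr])
  have hsqrt0 : 0 ≤ Real.sqrt (x ^ 2 - 1) := Real.sqrt_nonneg _
  have hR0 : 0 ≤ R := Real.log_nonneg (by linarith)
  have heR : Real.exp R = x + Real.sqrt (x ^ 2 - 1) := Real.exp_log (by linarith)
  have hsqrtx : Real.sqrt (x ^ 2 - 1) ≤ x := by
    calc Real.sqrt (x ^ 2 - 1) ≤ Real.sqrt (x ^ 2) := Real.sqrt_le_sqrt (by linarith)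
    _ = x := by rw [Real.sqrt_sq (by linarith)]
  have hsinhR : Real.sinh R ≤ x := by
    rw [Real.sinh_eq]
    have := Real.exp_pos (-R)
    nlinarith [heR]
  have hsinhR0 : 0 ≤ Real.sinh R := by
    rw [← Real.sinh_zero]; exact Real.sinh_le_sinh.2 hR0
  -- bound the integral
  have hint : (∫ u in (0:ℝ)..R, Real.sinh u ^ (m + 1))
      ≤ Real.sinh R ^ (m + 1) / (m + 1) := by
    have heq : (∫ u in (0:ℝ)..R, Real.cosh u • Real.sinh u ^ m)
        = Real.sinh R ^ (m + 1) / (m + 1) := by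
      have h := intervalIntegral.integral_comp_smul_deriv (a := 0) (b := R)
        (f := Real.sinh) (f' := Real.cosh) (g := fun y => y ^ m)
        (fun u _ => Real.hasDerivAt_sinh u) Real.continuous_cosh.continuousOn
        (continuous_pow m)
      simp only [Function.comp, Real.sinh_zero] at h
      rw [h, integral_pow]
      push_cast
      ring
    rw [← heq]
    apply intervalIntegral.integral_mono_on hR0
    · exact (Real.continuous_sinh.pow _).intervalIntegrable _ _
    · exact (Real.continuous_cosh.smul (Real.continuous_sinh.pow m)).intervalIntegrable _ _
    · intro u hu
      have hu0 : 0 ≤ Real.sinh u := by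
        rw [← Real.sinh_zero]; exact Real.sinh_le_sinh.2 hu.1
      have hsc : Real.sinh u ≤ Real.cosh u := (Real.sinh_lt_cosh u).le
      calc Real.sinh u ^ (m + 1) = Real.sinh u * Real.sinh u ^ m := by ring
      _ ≤ Real.cosh u * Real.sinh u ^ m := by
          exact mul_le_mul_of_nonneg_right hsc (pow_nonneg hu0 m)
      _ = Real.cosh u • Real.sinh u ^ m := rfl
  have hcast : ((m + 2 : ℕ) : ℝ) - 1 = ((m : ℝ) + 1) := by push_cast; ring
  have hkey : Real.exp (-r) * Real.sinh R ≤ (Real.cosh s)⁻¹ := by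
    have hce : Real.cosh r ≤ Real.exp r := by
      rw [Real.cosh_eq]
      have := Real.exp_le_exp.2 (neg_le_self hr)
      linarith
    have h2 : Real.exp (-r) * Real.cosh r ≤ 1 := by
      rw [Real.exp_neg, inv_mul_le_iff₀ (Real.exp_pos r), mul_one]
      exact hce
    have h1 : Real.exp (-r) * Real.sinh R ≤ Real.exp (-r) * x :=
      mul_le_mul_of_nonneg_left hsinhR (Real.exp_pos _).le
    refine h1.trans ?_
    rw [hx, div_eq_mul_inv, ← mul_assoc]
    calc Real.exp (-r) * Real.cosh r * (Real.cosh s)⁻¹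
        ≤ 1 * (Real.cosh s)⁻¹ := mul_le_mul_of_nonneg_right h2 (inv_nonneg.2 hcs.le)
      _ = (Real.cosh s)⁻¹ := one_mul _
  have hm1 : (0:ℝ) < (m : ℝ) + 1 := by positivity
  simp only [Nat.add_sub_cancel, hcast, ← hx, ← hR]
  calc Real.exp (-(r * ((m:ℝ) + 1))) * ∫ u in (0:ℝ)..R, Real.sinh u ^ (m + 1)
      ≤ Real.exp (-(r * ((m:ℝ) + 1))) * (Real.sinh R ^ (m + 1) / (m + 1)) :=
        mul_le_mul_of_nonneg_left hint (Real.exp_pos _).le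
    _ = (Real.exp (-r) * Real.sinh R) ^ (m + 1) / ((m:ℝ) + 1) := by
        rw [show -(r * ((m:ℝ) + 1)) = ((m + 1 : ℕ) : ℝ) * (-r) by push_cast; ring,
          Real.exp_nat_mul, mul_pow]
        ring
    _ ≤ ((Real.cosh s)⁻¹) ^ (m + 1) / ((m:ℝ) + 1) := by
        have hb : 0 ≤ Real.exp (-r) * Real.sinh R :=
          mul_nonneg (Real.exp_pos _).le hsinhR0
        gcongr
    _ = (Real.cosh s ^ (m + 1))⁻¹ / ((m:ℝ) + 1) := by rw [inv_pow]
end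

section
/- Let d ≥ 1 and 1 ≤ k ≤ d be integers, let u : Fin k → ℝ^d be an orthonormal family, and let x = w + y ∈ ℝ^d with ‖x‖ < 1, where ⟨w, u i⟩ = 0 for all i and y lies in the linear span of {u i : i ∈ Fin k}. Define the k × k real matrix M by M i j := ((1−‖x‖²)⟨u i, u j⟩ + ⟨x, u i⟩·⟨x, u j⟩) / (1−‖x‖²)². Then det M = (1 − ‖w‖²) / (1−‖x‖²)^{k+1}. -/
open RealInnerProductSpace Matrix

/-!
Write `a = 1 - ‖x‖²` and `c i = ⟪x, u i⟫`. Orthonormality turns the matrix into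
`a⁻² (a I + c cᵀ)`, a scaled rank-one perturbation of the identity, whose determinant is
`a^(k - 1) (a + ‖c‖²) / a^(2k)` by the matrix determinant lemma. Since `w ⊥ span u`, the
coefficients `c i` are those of `y` in the orthonormal family, so
`‖c‖² = ‖y‖² = ‖x‖² - ‖w‖²` and `a + ‖c‖² = 1 - ‖w‖²`.
-/

namespace Matrix

variable {n : Type*} [Fintype n] [DecidableEq n]

theorem det_one_add_vecMulVec {R : Type*} [CommRing R] (u v : n → R) :
    det (1 + vecMulVec u v) = 1 + v ⬝ᵥ u := by
  rw [vecMulVec_eq Unit, det_one_add_replicateCol_mul_replicateRow]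

theorem det_smul_one_add_vecMulVec {K : Type*} [Field K] {a : K} (ha : a ≠ 0) (u v : n → K) :
    det (a • 1 + vecMulVec u v) = a ^ Fintype.card n * (1 + a⁻¹ * v ⬝ᵥ u) := by
  have hfactor : a • 1 + vecMulVec u v = a • (1 + vecMulVec (a⁻¹ • u) v) := by
    rw [smul_add, smul_vecMulVec, smul_inv_smul₀ ha]
  rw [hfactor, det_smul, det_one_add_vecMulVec, dotProduct_smul, smul_eq_mul]

end Matrix

section Orthonormal

variable {ι E : Type*} [Fintype ι] [NormedAddCommGroup E] [InnerProductSpace ℝ E] {u : ι → E}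

theorem Orthonormal.det_of_inner_add_mul_div_sq [DecidableEq ι] (hu : Orthonormal ℝ u)
    {a : ℝ} (ha : a ≠ 0) (c : ι → ℝ) :
    det (of fun i j => (a * ⟪u i, u j⟫ + c i * c j) / a ^ 2)
      = (a + ∑ i, c i ^ 2) / a ^ (Fintype.card ι + 1) := by
  have hmatrix : of (fun i j => (a * ⟪u i, u j⟫ + c i * c j) / a ^ 2)
      = (a ^ 2)⁻¹ • (a • 1 + vecMulVec c c) := by
    ext i j
    simp only [of_apply, orthonormal_iff_ite.mp hu, Matrix.smul_apply, Matrix.add_apply,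
      smul_eq_mul, one_apply, vecMulVec_apply]
    field_simp
  simp only [hmatrix, det_smul, det_smul_one_add_vecMulVec ha, dotProduct, ← sq]
  rw [inv_pow, ← pow_mul, pow_succ, pow_mul']
  field_simp

theorem Orthonormal.sum_sq_inner_add_of_mem_span (hu : Orthonormal ℝ u) {w y : E}
    (hw : ∀ i, ⟪w, u i⟫ = 0) (hy : y ∈ Submodule.span ℝ (Set.range u)) :
    ∑ i, ⟪w + y, u i⟫ ^ 2 = ‖w + y‖ ^ 2 - ‖w‖ ^ 2 := by
  obtain ⟨f, rfl⟩ := (Submodule.mem_span_range_iff_exists_fun ℝ).1 hy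
  have hcoeff (i : ι) : ⟪w + ∑ j, f j • u j, u i⟫ = f i := by
    rw [inner_add_left, hw, hu.inner_left_fintype, zero_add, conj_trivial]
  have hperp : ⟪w, ∑ j, f j • u j⟫ = 0 := by
    simp only [inner_sum, real_inner_smul_right, hw, mul_zero, Finset.sum_const_zero]
  have hnorm : ‖∑ j, f j • u j‖ ^ 2 = ∑ j, f j ^ 2 := by
    rw [← real_inner_self_eq_norm_sq, hu.inner_sum]
    simp only [conj_trivial, sq]
  rw [norm_add_sq_real, hperp, mul_zero, add_zero, hnorm, add_sub_cancel_left]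
  simp only [hcoeff]

end Orthonormal

theorem beltrami_klein_gram_det_proj_general (d k : ℕ)
    (u : Fin k → EuclideanSpace ℝ (Fin d)) (hu : Orthonormal ℝ u)
    (w y : EuclideanSpace ℝ (Fin d))
    (hw : ∀ i, ⟪w, u i⟫ = 0) (hy : y ∈ Submodule.span ℝ (Set.range u))
    (x : EuclideanSpace ℝ (Fin d)) (hxwy : x = w + y) (hx : ‖x‖ < 1) :
    Matrix.det (Matrix.of fun i j : Fin k =>
        ((1 - ‖x‖ ^ 2) * ⟪u i, u j⟫ + ⟪x, u i⟫ * ⟪x, u j⟫) / (1 - ‖x‖ ^ 2) ^ 2)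
      = (1 - ‖w‖ ^ 2) / (1 - ‖x‖ ^ 2) ^ (k + 1) := by
  have ha : 1 - ‖x‖ ^ 2 ≠ 0 :=
    (sub_pos.2 (pow_lt_one₀ (norm_nonneg x) hx two_ne_zero)).ne'
  rw [hu.det_of_inner_add_mul_div_sq ha, Fintype.card_fin, hxwy,
    hu.sum_sq_inner_add_of_mem_span hw hy, sub_add_sub_cancel]

/-- Gram determinant of the Beltrami–Klein metric at x = w + y with respect to an
orthonormal family u : Fin k → ℝ^d, where w ⊥ span u and y ∈ span u, ‖x‖ < 1:
det M = (1 − ‖w‖²)/(1 − ‖x‖²)^{k+1}, where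
M i j = ((1−‖x‖²)⟨uᵢ, uⱼ⟩ + ⟨x, uᵢ⟩⟨x, uⱼ⟩)/(1−‖x‖²)². -/
theorem beltrami_klein_gram_det_proj (d k : ℕ) (hd : 1 ≤ d) (hk1 : 1 ≤ k) (hkd : k ≤ d)
    (u : Fin k → EuclideanSpace ℝ (Fin d)) (hu : Orthonormal ℝ u)
    (w y : EuclideanSpace ℝ (Fin d))
    (hw : ∀ i, ⟪w, u i⟫ = 0) (hy : y ∈ Submodule.span ℝ (Set.range u))
    (x : EuclideanSpace ℝ (Fin d)) (hxwy : x = w + y) (hx : ‖x‖ < 1) :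
    Matrix.det (Matrix.of fun i j : Fin k =>
        ((1 - ‖x‖ ^ 2) * ⟪u i, u j⟫ + ⟪x, u i⟫ * ⟪x, u j⟫) / (1 - ‖x‖ ^ 2) ^ 2)
      = (1 - ‖w‖ ^ 2) / (1 - ‖x‖ ^ 2) ^ (k + 1) :=
  beltrami_klein_gram_det_proj_general d k u hu w y hw hy x hxwy hx
end

section
/- Let E be a real inner product space and let x, y ∈ E with x ≠ y. Set τ := x − (⟨x, y−x⟩/‖y−x‖²)·(y−x), the orthogonal projection of the origin onto the affine line through x and y. Then (1 − ⟨x, y⟩)² − (1 − ‖x‖²)(1 − ‖y‖²) = ‖x−y‖²·(1 − ‖τ‖²). -/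
open RealInnerProductSpace

/-- Let x ≠ y in a real inner product space and let
τ = x − (⟨x, y−x⟩/‖y−x‖²)(y−x) be the foot of the perpendicular from the origin
to the line through x and y. Then
(1 − ⟨x,y⟩)² − (1 − ‖x‖²)(1 − ‖y‖²) = ‖x−y‖²(1 − ‖τ‖²). -/
theorem one_sub_inner_sq_sub_prod {E : Type*} [NormedAddCommGroup E]
    [InnerProductSpace ℝ E] (x y : E) (hxy : x ≠ y) :
    (1 - ⟪x, y⟫) ^ 2 - (1 - ‖x‖ ^ 2) * (1 - ‖y‖ ^ 2)
      = ‖x - y‖ ^ 2 * (1 - ‖x - (⟪x, y - x⟫ / ‖y - x‖ ^ 2) • (y - x)‖ ^ 2) := by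
  have hd : y - x ≠ 0 := sub_ne_zero.mpr hxy.symm
  have hd2 : ‖y - x‖ ^ 2 ≠ 0 := pow_ne_zero _ (norm_ne_zero_iff.mpr hd)
  have hτ : ‖x - (⟪x, y - x⟫ / ‖y - x‖ ^ 2) • (y - x)‖ ^ 2
      = ‖x‖ ^ 2 - ⟪x, y - x⟫ ^ 2 / ‖y - x‖ ^ 2 := by
    rw [norm_sub_sq_real, real_inner_smul_right, norm_smul, mul_pow, Real.norm_eq_abs, sq_abs]
    field_simp
    ring
  have hxd : ⟪x, y - x⟫ = ⟪x, y⟫ - ‖x‖ ^ 2 := by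
    rw [inner_sub_right, real_inner_self_eq_norm_sq]
  have hnd : ‖y - x‖ ^ 2 = ‖y‖ ^ 2 - 2 * ⟪x, y⟫ + ‖x‖ ^ 2 := by
    rw [norm_sub_sq_real, real_inner_comm]
  have hnd' : ‖x - y‖ ^ 2 = ‖y - x‖ ^ 2 := by rw [norm_sub_rev]
  rw [hτ, hnd', hxd]
  field_simp
  rw [hnd]
  ring
end

section
/- Let d and k be integers with 2 ≤ k ≤ d−1, and let c > 0 be a real constant. Let μ be the measure on ℝ given by restricting Lebesgue measure to (0, ∞) and taking density s ↦ c · (cosh s)^k · (sinh s)^{d−k−1}, and let φ : ℝ → ℝ be the map φ(s) := (cosh s)^{−(k−1)}. Then the pushforward measure φ_*μ equals the measure on ℝ given by restricting Lebesgue measure to the interval (0, 1) and taking density ρ(y) := (c/(k−1)) · y^{−(d+k−2)/(k−1)} · (1 − y^{2/(k−1)})^{(d−k)/2 − 1}. -/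
/-!
The map `φ s = (cosh s)^{-(k-1)}` is a strictly decreasing differentiable bijection of `(0, ∞)`
onto `(0, 1)`, so the one-dimensional change of variables formula gives
`φ_* (|φ'| · (ρ ∘ φ) ds) = ρ dy` on `(0, 1)`. With `x = cosh s` one has
`|φ'(s)| = (k-1) sinh s / x^k`, `φ(s)^{-(d+k-2)/(k-1)} = x^{d+k-2}` and
`1 - φ(s)^{2/(k-1)} = tanh² s`, and these multiply out to
`|φ'(s)| ρ(φ s) = c cosh^k s sinh^{d-k-1} s`.
-/

open MeasureTheory Real Set
open scoped ENNReal

theorem MeasureTheory.map_withDensity_abs_deriv_mul_comp {s : Set ℝ} {f f' : ℝ → ℝ}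
    (hs : MeasurableSet s) (hf' : ∀ x ∈ s, HasDerivWithinAt f (f' x) s x) (hf : InjOn f s)
    (hfm : Measurable f) (g : ℝ → ℝ≥0∞) :
    Measure.map f ((volume.restrict s).withDensity fun x => ENNReal.ofReal |f' x| * g (f x)) =
      (volume.restrict (f '' s)).withDensity g := by
  ext A hA
  rw [Measure.map_apply hfm hA, withDensity_apply _ (hfm hA), withDensity_apply _ hA,
    Measure.restrict_restrict (hfm hA), Measure.restrict_restrict hA, ← image_preimage_inter,
    lintegral_image_eq_lintegral_abs_deriv_mul ((hfm hA).inter hs)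
      (fun x hx => (hf' x hx.2).mono inter_subset_right) (hf.mono inter_subset_right)]

namespace Real

theorem strictAntiOn_inv_cosh_pow {n : ℕ} (hn : n ≠ 0) :
    StrictAntiOn (fun s => (cosh s ^ n)⁻¹) (Ici 0) := fun a ha _ hb hab =>
  inv_strictAnti₀ (pow_pos (cosh_pos a) n)
    (pow_lt_pow_left₀ (cosh_strictMonoOn ha hb hab) (cosh_pos a).le hn)

theorem image_inv_cosh_pow_Ioi {n : ℕ} (hn : n ≠ 0) :
    (fun s => (cosh s ^ n)⁻¹) '' Ioi 0 = Ioo 0 1 := by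
  ext y
  constructor
  · rintro ⟨s, hs, rfl⟩
    exact ⟨by positivity, inv_lt_one_of_one_lt₀ (one_lt_pow₀ (one_lt_cosh.2 hs.ne') hn)⟩
  · rintro ⟨hy₀, hy₁⟩
    have hx : 1 < y⁻¹ ^ (n⁻¹ : ℝ) := one_lt_rpow ((one_lt_inv₀ hy₀).2 hy₁) (by positivity)
    refine ⟨arcosh (y⁻¹ ^ (n⁻¹ : ℝ)), arcosh_pos hx, ?_⟩
    simp only [cosh_arcosh hx.le, rpow_inv_natCast_pow (inv_nonneg.2 hy₀.le) hn, inv_inv]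

theorem hasDerivAt_inv_cosh_pow (n : ℕ) (s : ℝ) :
    HasDerivAt (fun s => (cosh s ^ n)⁻¹) (-(n * sinh s / cosh s ^ (n + 1))) s := by
  have h : HasDerivAt (fun s => cosh s ^ n) (n * cosh s ^ (n - 1) * sinh s) s :=
    (hasDerivAt_cosh s).pow n
  refine (h.inv (pow_ne_zero n (cosh_pos s).ne')).congr_deriv ?_
  have := (cosh_pos s).ne'
  rcases n with _ | n
  · simp
  · rw [Nat.add_sub_cancel]
    field_simp
    ring

end Real

noncomputable def levyDensity (d k : ℕ) (c y : ℝ) : ℝ :=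
  (c / ((k : ℝ) - 1)) * y ^ (-(((d : ℝ) + (k : ℝ) - 2) / ((k : ℝ) - 1))) *
    (1 - y ^ ((2 : ℝ) / ((k : ℝ) - 1))) ^ (((d : ℝ) - (k : ℝ)) / 2 - 1)

theorem mul_levyDensity_inv_cosh_pow {d k : ℕ} (hk : 2 ≤ k) (hkd : k + 1 ≤ d) (c : ℝ) {s : ℝ}
    (hs : 0 < s) :
    ((k : ℝ) - 1) * sinh s / cosh s ^ k * levyDensity d k c (cosh s ^ (k - 1))⁻¹ =
      c * cosh s ^ k * sinh s ^ (d - k - 1) := by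
  obtain ⟨j, rfl⟩ : ∃ j, k = j + 2 := ⟨k - 2, by omega⟩
  obtain ⟨e, rfl⟩ : ∃ e, d = j + 3 + e := ⟨d - (j + 3), by omega⟩
  have hx : 0 < cosh s := cosh_pos s
  have htanh : 0 < sinh s / cosh s := div_pos (sinh_pos_iff.2 hs) hx
  have hj : (j : ℝ) + 1 ≠ 0 := by positivity
  have hpow (a : ℝ) : ((cosh s ^ (j + 1))⁻¹) ^ a = cosh s ^ (-((j + 1) * a)) := by
    rw [inv_rpow (by positivity), ← rpow_natCast_mul hx.le, rpow_neg hx.le]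
    push_cast
    rfl
  have hfirst : -((j + 1 : ℝ) * -((j + 3 + e + (j + 2) - 2) / (j + 1))) =
      (2 * j + e + 3 : ℕ) := by
    push_cast
    field_simp
    ring
  have hsecond : 1 - cosh s ^ (-((j + 1 : ℝ) * (2 / (j + 1)))) = (sinh s / cosh s) ^ 2 := by
    rw [mul_div_cancel₀ _ hj, rpow_neg hx.le, rpow_two]
    field_simp
    linarith [cosh_sq s]
  have hthird : ((sinh s / cosh s) ^ 2) ^ ((j + 3 + e - (j + 2) : ℝ) / 2 - 1) =
      (sinh s / cosh s) ^ e / (sinh s / cosh s) := by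
    rw [← rpow_natCast_mul htanh.le, ← rpow_natCast, ← rpow_sub_one htanh.ne']
    push_cast
    ring_nf
  simp only [levyDensity, show j + 3 + e - (j + 2) - 1 = e by omega]
  push_cast
  rw [hpow, hpow, show (j : ℝ) + 2 - 1 = j + 1 by ring, hfirst, hsecond, hthird, rpow_natCast,
    div_pow]
  field_simp
  ring

theorem levy_measure_density_general (d k : ℕ) (hk : 2 ≤ k) (hkd : k ≤ d - 1) (c : ℝ) :
    Measure.map (fun s : ℝ => (Real.cosh s ^ (k - 1))⁻¹)
        ((volume.restrict (Set.Ioi (0:ℝ))).withDensity fun s =>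
          ENNReal.ofReal (c * Real.cosh s ^ k * Real.sinh s ^ (d - k - 1)))
      = (volume.restrict (Set.Ioo (0:ℝ) 1)).withDensity fun y =>
          ENNReal.ofReal ((c / ((k : ℝ) - 1)) *
            y ^ (-(((d : ℝ) + (k : ℝ) - 2) / ((k : ℝ) - 1))) *
            (1 - y ^ ((2 : ℝ) / ((k : ℝ) - 1))) ^ (((d : ℝ) - (k : ℝ)) / 2 - 1)) := by
  have hk₁ : k - 1 ≠ 0 := by omega
  have hk_sub_one_pos : (0 : ℝ) < k - 1 := by rw [sub_pos, Nat.one_lt_cast]; omega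
  have hderiv (s : ℝ) : HasDerivAt (fun s => (cosh s ^ (k - 1))⁻¹)
      (-(((k : ℝ) - 1) * sinh s / cosh s ^ k)) s := by
    simpa only [Nat.cast_pred (by omega : 0 < k), Nat.sub_add_cancel (by omega : 1 ≤ k)] using
      hasDerivAt_inv_cosh_pow (k - 1) s
  calc _ = Measure.map (fun s => (cosh s ^ (k - 1))⁻¹) ((volume.restrict (Ioi 0)).withDensity
          fun s => ENNReal.ofReal |-(((k : ℝ) - 1) * sinh s / cosh s ^ k)| *
            ENNReal.ofReal (levyDensity d k c (cosh s ^ (k - 1))⁻¹)) := by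
        refine congrArg (Measure.map _) <| withDensity_congr_ae <|
          (ae_restrict_iff' measurableSet_Ioi).2 <| Filter.Eventually.of_forall fun s hs => ?_
        have hsinh := sinh_pos_iff.2 hs
        dsimp only
        rw [abs_neg, abs_of_pos (by positivity), ← ENNReal.ofReal_mul (by positivity),
          mul_levyDensity_inv_cosh_pow hk (by omega) c hs]
    _ = (volume.restrict ((fun s => (cosh s ^ (k - 1))⁻¹) '' Ioi 0)).withDensity
          fun y => ENNReal.ofReal (levyDensity d k c y) :=
        map_withDensity_abs_deriv_mul_comp measurableSet_Ioi
          (fun s _ => (hderiv s).hasDerivWithinAt)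
          ((strictAntiOn_inv_cosh_pow hk₁).injOn.mono Ioi_subset_Ici_self) (by fun_prop)
          (fun y => ENNReal.ofReal (levyDensity d k c y))
    _ = _ := by rw [image_inv_cosh_pow_Ioi hk₁]; rfl

/-- Pushforward of the intensity measure c·cosh^k s·sinh^{d−k−1} s ds on (0,∞)
under s ↦ (cosh s)^{−(k−1)} is the measure on (0,1) with Lebesgue density
ρ(y) = (c/(k−1))·y^{−(d+k−2)/(k−1)}·(1 − y^{2/(k−1)})^{(d−k)/2−1}
(the Lévy measure density of the limit variable Z). -/
theorem levy_measure_density (d k : ℕ) (hk : 2 ≤ k) (hkd : k ≤ d - 1) (c : ℝ) (hc : 0 < c) :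
    Measure.map (fun s : ℝ => (Real.cosh s ^ (k - 1))⁻¹)
        ((volume.restrict (Set.Ioi (0:ℝ))).withDensity fun s =>
          ENNReal.ofReal (c * Real.cosh s ^ k * Real.sinh s ^ (d - k - 1)))
      = (volume.restrict (Set.Ioo (0:ℝ) 1)).withDensity fun y =>
          ENNReal.ofReal ((c / ((k : ℝ) - 1)) *
            y ^ (-(((d : ℝ) + (k : ℝ) - 2) / ((k : ℝ) - 1))) *
            (1 - y ^ ((2 : ℝ) / ((k : ℝ) - 1))) ^ (((d : ℝ) - (k : ℝ)) / 2 - 1)) :=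
  levy_measure_density_general d k hk hkd c
end
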